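/- Let N ≥ 1 and let u : ℝ^N → ℝ be a smooth ℤ^N-periodic function. Define the scalar function φ(x) = g(∇u(x)) · (D²u(x) g(∇u(x))), where g(p) = p/√(1+|p|²). Then |∫_{[0,1]^N} ∇u(x) · ∇φ(x) dx| ≤ ∫_{[0,1]^N} (Δu(x))² dx. -/

import Mathlib

open MeasureTheory
open scoped RealInnerProductSpace

noncomputable section

abbrev Euc (N : ℕ) := EuclideanSpace ℝ (Fin N)

/-- Hessian matrix `(D²u(x))_{ij} = ∂_i ∂_j u(x)`. -/
def hessian {N : ℕ} (u : Euc N → ℝ) (x : Euc N) : Matrix (Fin N) (Fin N) ℝ :=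
  Matrix.of fun i j =>
    fderiv ℝ (fun y => fderiv ℝ u y (EuclideanSpace.single j 1)) x (EuclideanSpace.single i 1)

/-- `g(p) = p / √(1+|p|²)`. -/
def gmap {N : ℕ} (p : Euc N) : Euc N := (Real.sqrt (1 + ‖p‖ ^ 2))⁻¹ • p

/-- The integer translation vector associated to `k : Fin N → ℤ`. -/
def intVec {N : ℕ} (k : Fin N → ℤ) : Euc N :=
  (WithLp.equiv 2 (Fin N → ℝ)).symm fun i => (k i : ℝ)

/-- The unit cube `[0,1]^N`. -/
def unitCube (N : ℕ) : Set (Euc N) := {x | ∀ i, x i ∈ Set.Icc (0 : ℝ) 1}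

/-!
Integrating by parts on the torus, `∫ ∇u · ∇φ = -∫ φ Δu`. Since `|g| ≤ 1`, Cauchy–Schwarz gives
`φ² ≤ |D²u|²` pointwise, hence `|∫ φ Δu| ≤ (∫ |D²u|² + ∫ (Δu)²) / 2`, and two more integrations by
parts turn `∫ (∂ᵢ∂ⱼu)²` into `∫ ∂ᵢ∂ᵢu ∂ⱼ∂ⱼu`, so that `∫ |D²u|² = ∫ (Δu)²`. Each integration by
parts is the divergence theorem on `[0,1]^N`, whose opposite faces cancel by periodicity.
-/

open Function Set

theorem Function.Periodic.fderiv {E F : Type*} [NormedAddCommGroup E] [NormedSpace ℝ E]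
    [NormedAddCommGroup F] [NormedSpace ℝ F] {f : E → F} {c : E} (h : Periodic f c) :
    Periodic (fderiv ℝ f) c := fun x => by
  rw [← fderiv_comp_add_right, h.funext]

theorem sq_sum_sum_mul_mul_le {ι : Type*} [Fintype ι] (c : ι → ℝ) (A : ι → ι → ℝ)
    (hc : ∑ i, c i ^ 2 ≤ 1) : (∑ i, ∑ j, c i * A i j * c j) ^ 2 ≤ ∑ i, ∑ j, A i j ^ 2 := by
  have hcol : ∀ j, (∑ i, c i * A i j) ^ 2 ≤ ∑ i, A i j ^ 2 := fun j =>
    (Finset.sum_mul_sq_le_sq_mul_sq _ _ _).trans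
      (mul_le_of_le_one_left (Finset.sum_nonneg fun i _ => sq_nonneg _) hc)
  calc (∑ i, ∑ j, c i * A i j * c j) ^ 2 = (∑ j, (∑ i, c i * A i j) * c j) ^ 2 := by
        rw [Finset.sum_comm]
        simp_rw [Finset.sum_mul]
    _ ≤ (∑ j, (∑ i, c i * A i j) ^ 2) * ∑ j, c j ^ 2 := Finset.sum_mul_sq_le_sq_mul_sq _ _ _
    _ ≤ ∑ j, (∑ i, c i * A i j) ^ 2 :=
        mul_le_of_le_one_right (Finset.sum_nonneg fun j _ => sq_nonneg _) hc
    _ ≤ ∑ j, ∑ i, A i j ^ 2 := Finset.sum_le_sum fun j _ => hcol j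
    _ = ∑ i, ∑ j, A i j ^ 2 := Finset.sum_comm

theorem abs_integral_mul_le_of_sq_le {α : Type*} [MeasurableSpace α] {μ : Measure α}
    {f g S : α → ℝ} (hS : Integrable S μ) (hg : Integrable (fun x => g x ^ 2) μ)
    (hfS : ∀ x, f x ^ 2 ≤ S x) :
    |∫ x, f x * g x ∂μ| ≤ (∫ x, S x ∂μ + ∫ x, g x ^ 2 ∂μ) / 2 := by
  rw [← Real.norm_eq_abs, ← integral_add hS hg, ← integral_div]
  refine norm_integral_le_of_norm_le ((hS.add hg).div_const 2) (.of_forall fun x => ?_)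
  rw [Real.norm_eq_abs, abs_mul]
  nlinarith [sq_nonneg (|f x| - |g x|), sq_abs (f x), sq_abs (g x), hfS x]

theorem Fin.insertNth_one_eq_add_single {n : ℕ} (i : Fin (n + 1)) (x : Fin n → ℝ) :
    i.insertNth (α := fun _ => ℝ) 1 x = i.insertNth 0 x + Pi.single i 1 := by
  rw [← sub_eq_iff_eq_add', Fin.insertNth_sub_same, sub_zero]

theorem integral_Icc_fderiv_single_eq_zero {n : ℕ} {i : Fin (n + 1)}
    {F : (Fin (n + 1) → ℝ) → ℝ} (hF : ContDiff ℝ 1 F) (hper : Periodic F (Pi.single i 1)) :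
    ∫ y in Icc 0 1, fderiv ℝ F y (Pi.single i 1) = 0 := by
  let f : Fin (n + 1) → (Fin (n + 1) → ℝ) → ℝ := Pi.single i F
  let f' : Fin (n + 1) → (Fin (n + 1) → ℝ) → (Fin (n + 1) → ℝ) →L[ℝ] ℝ :=
    Pi.single i (fderiv ℝ F)
  have hdiv : ∀ y, ∑ j, f' j y (Pi.single j 1) = fderiv ℝ F y (Pi.single i 1) := fun y => by
    rw [Finset.sum_eq_single i (fun j _ hj => by simp [f', hj]) (by simp)]
    simp [f']
  simp_rw [← hdiv]
  rw [integral_divergence_of_hasFDerivAt_off_countable' 0 1 zero_le_one f f' ∅ countable_empty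
    ?cont ?deriv ?int]
  case cont =>
    intro j
    rcases eq_or_ne j i with rfl | hj
    · simpa [f] using hF.continuous.continuousOn
    · simp only [f, Pi.single_eq_of_ne hj]
      exact continuousOn_const
  case deriv =>
    intro y _ j
    rcases eq_or_ne j i with rfl | hj
    · simpa [f, f'] using (hF.differentiable one_ne_zero y).hasFDerivAt
    · simp only [f, f', Pi.single_eq_of_ne hj]
      exact hasFDerivAt_const 0 y
  case int =>
    simp_rw [hdiv]
    exact ((hF.continuous_fderiv one_ne_zero).clm_apply continuous_const).integrableOn_Icc
  refine Finset.sum_eq_zero fun j _ => ?_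
  rcases eq_or_ne j i with rfl | hj
  · simp [f, Fin.insertNth_one_eq_add_single, hper _]
  · simp [f, hj]

section

variable {N : ℕ}

def partialDeriv (i : Fin N) (f : Euc N → ℝ) (x : Euc N) : ℝ :=
  fderiv ℝ f x (EuclideanSpace.single i 1)

theorem Function.Periodic.partialDeriv {f : Euc N → ℝ} {c : Euc N} (h : Periodic f c)
    (i : Fin N) : Periodic (partialDeriv i f) c :=
  h.fderiv.comp fun L => L (EuclideanSpace.single i 1)

theorem contDiff_partialDeriv {n m : WithTop ℕ∞} {f : Euc N → ℝ} (hf : ContDiff ℝ n f)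
    (hmn : m + 1 ≤ n) (i : Fin N) : ContDiff ℝ m (partialDeriv i f) :=
  (hf.fderiv_right hmn).clm_apply contDiff_const

theorem continuous_partialDeriv {f : Euc N → ℝ} (hf : ContDiff ℝ 1 f) (i : Fin N) :
    Continuous (partialDeriv i f) :=
  (hf.continuous_fderiv one_ne_zero).clm_apply continuous_const

theorem partialDeriv_mul {f g : Euc N → ℝ} {x : Euc N} (hf : DifferentiableAt ℝ f x)
    (hg : DifferentiableAt ℝ g x) (i : Fin N) :
    partialDeriv i (fun y => f y * g y) x =
      partialDeriv i f x * g x + f x * partialDeriv i g x := by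
  simp [partialDeriv, fderiv_fun_mul hf hg]
  ring

theorem partialDeriv_comm {f : Euc N → ℝ} (hf : ContDiff ℝ 2 f) (i j : Fin N) (x : Euc N) :
    partialDeriv i (partialDeriv j f) x = partialDeriv j (partialDeriv i f) x := by
  have hsymm : IsSymmSndFDerivAt ℝ f x :=
    hf.contDiffAt.isSymmSndFDerivAt (by simp [minSmoothness_of_isRCLikeNormedField])
  have hsnd : ∀ a b : Fin N, partialDeriv a (partialDeriv b f) x =
      fderiv ℝ (fderiv ℝ f) x (EuclideanSpace.single a 1) (EuclideanSpace.single b 1) := by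
    intro a b
    unfold partialDeriv
    rw [fderiv_clm_apply ((hf.fderiv_right le_rfl).differentiable one_ne_zero x)
      (differentiableAt_const _)]
    simp
  rw [hsnd, hsnd, hsymm]

theorem hessian_apply (u : Euc N → ℝ) (x : Euc N) (i j : Fin N) :
    hessian u x i j = partialDeriv i (partialDeriv j u) x :=
  rfl

theorem gradient_apply (f : Euc N → ℝ) (x : Euc N) (i : Fin N) :
    gradient f x i = partialDeriv i f x := by
  rw [partialDeriv, ← inner_gradient_left, EuclideanSpace.inner_single_right]
  simp

theorem inner_gradient_gradient (f g : Euc N → ℝ) (x : Euc N) :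
    ⟪gradient f x, gradient g x⟫ = ∑ i, partialDeriv i f x * partialDeriv i g x := by
  simp only [PiLp.inner_apply, gradient_apply, RCLike.inner_apply, conj_trivial, mul_comm]

theorem intVec_single (i : Fin N) : intVec (Pi.single i 1) = EuclideanSpace.single i 1 := by
  ext j
  simp [intVec, Pi.single_apply]

theorem preimage_toLp_unitCube : WithLp.toLp 2 ⁻¹' unitCube N = Icc 0 1 := by
  ext y
  simp [unitCube, Pi.le_def, forall_and]

theorem isCompact_unitCube : IsCompact (unitCube N) := by
  rw [← image_preimage_eq (unitCube N) (WithLp.toLp_surjective 2), preimage_toLp_unitCube]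
  exact isCompact_Icc.image (PiLp.continuous_toLp 2 _)

theorem Continuous.integrableOn_unitCube {E : Type*} [NormedAddCommGroup E] {f : Euc N → E}
    (hf : Continuous f) : IntegrableOn f (unitCube N) :=
  hf.continuousOn.integrableOn_compact isCompact_unitCube

theorem setIntegral_unitCube {E : Type*} [NormedAddCommGroup E] [NormedSpace ℝ E]
    (f : Euc N → E) : ∫ x in unitCube N, f x = ∫ y in Icc 0 1, f (WithLp.toLp 2 y) := by
  rw [← preimage_toLp_unitCube, (PiLp.volume_preserving_toLp (Fin N)).setIntegral_preimage_emb
    (MeasurableEquiv.toLp 2 (Fin N → ℝ)).measurableEmbedding]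

theorem integral_unitCube_sum_sum {ι κ : Type*} [Fintype ι] [Fintype κ]
    {F : ι → κ → Euc N → ℝ} (hF : ∀ i j, Continuous (F i j)) :
    ∫ x in unitCube N, ∑ i, ∑ j, F i j x = ∑ i, ∑ j, ∫ x in unitCube N, F i j x := by
  rw [integral_finsetSum _ fun i _ =>
    (continuous_finsetSum _ fun j _ => hF i j).integrableOn_unitCube]
  exact Finset.sum_congr rfl fun i _ =>
    integral_finsetSum _ fun j _ => (hF i j).integrableOn_unitCube

theorem integral_partialDeriv_eq_zero {i : Fin N} {f : Euc N → ℝ} (hf : ContDiff ℝ 1 f)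
    (hper : Periodic f (EuclideanSpace.single i 1)) :
    ∫ x in unitCube N, partialDeriv i f x = 0 := by
  obtain ⟨n, rfl⟩ : ∃ n, N = n + 1 := Nat.exists_eq_add_one.2 i.pos
  let L := (PiLp.continuousLinearEquiv 2 ℝ (fun _ : Fin (n + 1) => ℝ)).symm
  have hchain : ∀ y, fderiv ℝ (f ∘ L) y (Pi.single i 1) = partialDeriv i f (L y) := fun y => by
    rw [L.comp_right_fderiv]
    rfl
  rw [setIntegral_unitCube, ← integral_Icc_fderiv_single_eq_zero (i := i) (hf.comp L.contDiff)
    (fun y => hper (L y))]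
  simp_rw [hchain]
  rfl

theorem integral_partialDeriv_mul_eq_neg {i : Fin N} {f g : Euc N → ℝ} (hf : ContDiff ℝ 1 f)
    (hg : ContDiff ℝ 1 g) (hfp : Periodic f (EuclideanSpace.single i 1))
    (hgp : Periodic g (EuclideanSpace.single i 1)) :
    ∫ x in unitCube N, partialDeriv i f x * g x =
      -∫ x in unitCube N, f x * partialDeriv i g x := by
  have hzero := integral_partialDeriv_eq_zero (hf.mul hg) (hfp.mul hgp)
  simp_rw [partialDeriv_mul (hf.differentiable one_ne_zero _) (hg.differentiable one_ne_zero _)]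
    at hzero
  rw [integral_add
    ((continuous_partialDeriv hf i).fun_mul hg.continuous).integrableOn_unitCube
    (hf.continuous.fun_mul (continuous_partialDeriv hg i)).integrableOn_unitCube]
    at hzero
  linarith

theorem integral_inner_gradient_eq_neg {f g : Euc N → ℝ} (hf : ContDiff ℝ 2 f)
    (hg : ContDiff ℝ 1 g) (hfp : ∀ i, Periodic f (EuclideanSpace.single i 1))
    (hgp : ∀ i, Periodic g (EuclideanSpace.single i 1)) :
    ∫ x in unitCube N, ⟪gradient f x, gradient g x⟫ =
      -∫ x in unitCube N, g x * ∑ i, hessian f x i i := by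
  have hf' : ∀ i, ContDiff ℝ 1 (partialDeriv i f) := contDiff_partialDeriv hf (by norm_num)
  simp_rw [inner_gradient_gradient, Finset.mul_sum, hessian_apply]
  rw [integral_finsetSum _ fun i _ => ((continuous_partialDeriv (hf.of_le (by norm_num)) i).fun_mul
      (continuous_partialDeriv hg i)).integrableOn_unitCube,
    integral_finsetSum _ fun i _ => (hg.continuous.fun_mul
      (continuous_partialDeriv (hf' i) i)).integrableOn_unitCube,
    ← Finset.sum_neg_distrib]
  refine Finset.sum_congr rfl fun i _ => ?_
  simp_rw [mul_comm (partialDeriv i f _)]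
  exact integral_partialDeriv_mul_eq_neg hg (hf' i) (hgp i) ((hfp i).partialDeriv i)

theorem integral_sq_partialDeriv_partialDeriv {u : Euc N → ℝ} (hu : ContDiff ℝ 3 u) {i j : Fin N}
    (hi : Periodic u (EuclideanSpace.single i 1)) (hj : Periodic u (EuclideanSpace.single j 1)) :
    ∫ x in unitCube N, partialDeriv i (partialDeriv j u) x ^ 2 =
      ∫ x in unitCube N,
        partialDeriv i (partialDeriv i u) x * partialDeriv j (partialDeriv j u) x := by
  have hiu : ContDiff ℝ 2 (partialDeriv i u) := contDiff_partialDeriv hu (by norm_num) i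
  have hju : ContDiff ℝ 2 (partialDeriv j u) := contDiff_partialDeriv hu (by norm_num) j
  have hthird : ∀ x, partialDeriv i (partialDeriv i (partialDeriv j u)) x =
      partialDeriv j (partialDeriv i (partialDeriv i u)) x := fun x => by
    rw [funext (partialDeriv_comm (hu.of_le (by norm_num)) i j)]
    exact partialDeriv_comm hiu i j x
  have hibp_i := integral_partialDeriv_mul_eq_neg (hju.of_le (by norm_num))
    (contDiff_partialDeriv hju (by norm_num) i) (hi.partialDeriv j)
    ((hi.partialDeriv j).partialDeriv i)
  have hibp_j := integral_partialDeriv_mul_eq_neg (hju.of_le (by norm_num))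
    (contDiff_partialDeriv hiu (by norm_num) i) (hj.partialDeriv j)
    ((hj.partialDeriv i).partialDeriv i)
  simp_rw [sq, hibp_i, hthird, ← hibp_j, mul_comm]

theorem integral_sum_sq_hessian {u : Euc N → ℝ} (hu : ContDiff ℝ 3 u)
    (hper : ∀ i, Periodic u (EuclideanSpace.single i 1)) :
    ∫ x in unitCube N, ∑ i, ∑ j, hessian u x i j ^ 2 =
      ∫ x in unitCube N, (∑ i, hessian u x i i) ^ 2 := by
  have hcont : ∀ i j, Continuous fun x => hessian u x i j := fun i j =>
    continuous_partialDeriv (contDiff_partialDeriv hu (by norm_num) j) i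
  simp_rw [sq (∑ i, _), Finset.sum_mul_sum]
  rw [integral_unitCube_sum_sum fun i j => (hcont i j).fun_pow 2,
    integral_unitCube_sum_sum fun i j => (hcont i i).fun_mul (hcont j j)]
  simp only [hessian_apply]
  exact Finset.sum_congr rfl fun i _ => Finset.sum_congr rfl fun j _ =>
    integral_sq_partialDeriv_partialDeriv hu (hper i) (hper j)

theorem norm_gmap_le_one (p : Euc N) : ‖gmap p‖ ≤ 1 := by
  have hroot : 0 < √(1 + ‖p‖ ^ 2) := Real.sqrt_pos.2 (by positivity)
  rw [gmap, norm_smul, norm_inv, Real.norm_of_nonneg hroot.le, inv_mul_le_one₀ hroot]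
  exact Real.le_sqrt_of_sq_le (by linarith)

theorem contDiff_gmap {n : WithTop ℕ∞} : ContDiff ℝ n (gmap : Euc N → Euc N) := by
  have hpos : ∀ p : Euc N, 0 < 1 + ‖p‖ ^ 2 := fun p => by positivity
  exact (((contDiff_const.add (contDiff_norm_sq ℝ)).sqrt fun p => (hpos p).ne').inv
    fun p => (Real.sqrt_pos.2 (hpos p)).ne').smul contDiff_id

theorem contDiff_gradient {n m : WithTop ℕ∞} {f : Euc N → ℝ} (hf : ContDiff ℝ n f)
    (hmn : m + 1 ≤ n) : ContDiff ℝ m (gradient f) :=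
  contDiff_piLp' 2 fun i => by
    simp_rw [gradient_apply]
    exact contDiff_partialDeriv hf hmn i

def itoCorrection (u : Euc N → ℝ) (y : Euc N) : ℝ :=
  ∑ i, ∑ j, gmap (gradient u y) i * hessian u y i j * gmap (gradient u y) j

theorem sq_itoCorrection_le (u : Euc N → ℝ) (y : Euc N) :
    itoCorrection u y ^ 2 ≤ ∑ i, ∑ j, hessian u y i j ^ 2 :=
  sq_sum_sum_mul_mul_le _ _ <| by
    rw [← EuclideanSpace.real_norm_sq_eq]
    exact pow_le_one₀ (norm_nonneg _) (norm_gmap_le_one _)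

theorem contDiff_itoCorrection {u : Euc N → ℝ} (hu : ContDiff ℝ 3 u) :
    ContDiff ℝ 1 (itoCorrection u) := by
  have hg : ∀ i, ContDiff ℝ 1 fun y => gmap (gradient u y) i := fun i =>
    (contDiff_piLp_apply 2).comp (contDiff_gmap.comp (contDiff_gradient hu (by norm_num)))
  have hH : ∀ i j, ContDiff ℝ 1 fun y => hessian u y i j := fun i j =>
    contDiff_partialDeriv (contDiff_partialDeriv (m := 2) hu (by norm_num) j) (by norm_num) i
  exact ContDiff.sum fun i _ => ContDiff.sum fun j _ => ((hg i).mul (hH i j)).mul (hg j)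

theorem Function.Periodic.itoCorrection {u : Euc N → ℝ} {c : Euc N} (h : Periodic u c) :
    Periodic (_root_.itoCorrection u) c := by
  have hgrad : Periodic (gradient u) c := fun x =>
    congrArg (InnerProductSpace.toDual ℝ (Euc N)).symm (h.fderiv x)
  have hhess : Periodic (hessian u) c := fun x =>
    Matrix.ext fun i j => (h.partialDeriv j).partialDeriv i x
  intro x
  simp only [_root_.itoCorrection, hgrad x, hhess x]

end

theorem stmt_15_general (N : ℕ) (u : Euc N → ℝ) (hu : ContDiff ℝ (⊤ : ℕ∞) u)
    (hper : ∀ (x : Euc N) (k : Fin N → ℤ), u (x + intVec k) = u x) :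
    |∫ x in unitCube N,
        ⟪gradient u x,
          gradient (fun y => ∑ i, ∑ j,
            gmap (gradient u y) i * hessian u y i j * gmap (gradient u y) j) x⟫| ≤
      ∫ x in unitCube N, (∑ i, hessian u x i i) ^ 2 := by
  have hu3 : ContDiff ℝ 3 u := hu.of_le (WithTop.coe_le_coe.2 le_top)
  have hperiodic : ∀ i, Periodic u (EuclideanSpace.single i 1) := fun i x => by
    simpa only [intVec_single] using hper x (Pi.single i 1)
  have hH : ∀ i j, Continuous fun x => hessian u x i j := fun i j =>
    continuous_partialDeriv (contDiff_partialDeriv (m := 1) hu3 (by norm_num) j) i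
  change |∫ x in unitCube N, ⟪gradient u x, gradient (itoCorrection u) x⟫| ≤ _
  rw [integral_inner_gradient_eq_neg (hu3.of_le (by norm_num)) (contDiff_itoCorrection hu3)
    hperiodic fun i => (hperiodic i).itoCorrection, abs_neg]
  calc _ ≤ ((∫ x in unitCube N, ∑ i, ∑ j, hessian u x i j ^ 2) +
        ∫ x in unitCube N, (∑ i, hessian u x i i) ^ 2) / 2 :=
        abs_integral_mul_le_of_sq_le
          (continuous_finsetSum _ fun i _ => continuous_finsetSum _ fun j _ =>
            (hH i j).fun_pow 2).integrableOn_unitCube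
          ((continuous_finsetSum _ fun i _ => hH i i).fun_pow 2).integrableOn_unitCube
          (sq_itoCorrection_le u)
    _ = _ := by rw [integral_sum_sq_hessian hu3 hperiodic, add_self_div_two]

/-- For smooth `ℤ^N`-periodic `u` and
`φ = g(∇u)·(D²u g(∇u))` with `g(p) = p/√(1+|p|²)`, one has
`|∫_{[0,1]^N} ∇u·∇φ| ≤ ∫_{[0,1]^N} (Δu)²`. -/
theorem stmt_15 (N : ℕ) (hN : 1 ≤ N) (u : Euc N → ℝ) (hu : ContDiff ℝ (⊤ : ℕ∞) u)
    (hper : ∀ (x : Euc N) (k : Fin N → ℤ), u (x + intVec k) = u x) :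
    |∫ x in unitCube N,
        ⟪gradient u x,
          gradient (fun y => ∑ i, ∑ j,
            gmap (gradient u y) i * hessian u y i j * gmap (gradient u y) j) x⟫| ≤
      ∫ x in unitCube N, (∑ i, hessian u x i i) ^ 2 :=
  stmt_15_general N u hu hper
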